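/- Let V be a finite type and f : Finset V → ℝ normalized, non-decreasing, and submodular, with f({v}) > 0 for every v ∈ V, and curvature κ := κ_f. Let a : Fin n → V be injective, let A be the image of a, and for each i let A_{[i]} := {a 0, …, a (i−1)} denote the prefix of the first i elements. Then for every subset B ⊆ V, f(B) ≤ κ·f(A) + (1 − κ)·Σ_{i : a i ∈ B} f(a i | A_{[i]}) + Σ_{b ∈ B∖A} f(b | A). -/

import Mathlib

/-!
Write `A` for the image of `a`, `A_{[i]}` for its prefixes and `κ = curvature f`.
Adding the elements of `A \ B` to `B` one at a time, each step gains at least its marginal gain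
with respect to everything else, `f(x | V \ {x})`, while adding `B \ A` to `A` gains at most
`Σ f(b | A)`. Hence `f B ≤ f A + Σ_{b ∈ B \ A} f(b | A) - Σ_{x ∈ A \ B} f(x | V \ {x})`.
By the definition of curvature and submodularity, `f(x | V \ {x}) ≥ (1 - κ) f({x}) ≥
(1 - κ) f(x | A_{[i]})` for `x = a i`, and the prefix gains of all of `A` telescope to `f A`.
-/

/-- Marginal gain `f(s | A) = f(A ∪ {s}) - f A`. -/
noncomputable def marg {V : Type*} [DecidableEq V] (f : Finset V → ℝ) (s : V) (A : Finset V) : ℝ :=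
  f (insert s A) - f A

/-- Submodular mutual information `I_f(a ; S) = f({a}) - f(a | S)`. -/
noncomputable def smi {V : Type*} [DecidableEq V] (f : Finset V → ℝ) (a : V) (S : Finset V) : ℝ :=
  f {a} - marg f a S

/-- Curvature `κ_f = 1 - min_{v ∈ V} (f(V) - f(V \ {v})) / f({v})`. -/
noncomputable def curvature {V : Type*} [Fintype V] [Nonempty V] [DecidableEq V]
    (f : Finset V → ℝ) : ℝ :=
  1 - Finset.univ.inf' Finset.univ_nonempty
        (fun v => (f Finset.univ - f (Finset.univ \ {v})) / f {v})

open Finset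

section Marginal

variable {V : Type*} [DecidableEq V] (f : Finset V → ℝ)

lemma apply_insert_eq_add_marg (s : V) (A : Finset V) : f (insert s A) = f A + marg f s A := by
  rw [marg]; ring

lemma sum_marg_prefix_eq {n : ℕ} (a : Fin n → V) :
    ∑ i : Fin n, marg f (a i) ((univ.filter fun j : Fin n => j < i).image a)
      = f (univ.image a) - f ∅ := by
  let prefixImage (k : ℕ) : Finset V := (univ.filter fun j : Fin n => (j : ℕ) < k).image a
  have prefixImage_succ (i : Fin n) : prefixImage (i + 1) = insert (a i) (prefixImage i) := by
    simp only [prefixImage, ← image_insert]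
    congr 1
    ext j
    simp only [mem_filter, mem_univ, true_and, mem_insert, Fin.ext_iff]
    omega
  have prefixImage_zero : prefixImage 0 = ∅ := by simp [prefixImage]
  have prefixImage_self : prefixImage n = univ.image a := by simp [prefixImage]
  calc ∑ i : Fin n, marg f (a i) ((univ.filter fun j : Fin n => j < i).image a)
      = ∑ i : Fin n, (f (prefixImage (i + 1)) - f (prefixImage i)) := by
        simp only [prefixImage_succ, marg]
        rfl
    _ = f (univ.image a) - f ∅ := by
        rw [Fin.sum_univ_eq_sum_range (fun k => f (prefixImage (k + 1)) - f (prefixImage k)),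
          sum_range_sub (fun k => f (prefixImage k)), prefixImage_zero, prefixImage_self]

variable {f}

lemma marg_le_apply_singleton (hnorm : f ∅ = 0)
    (hsubmod : ∀ A B : Finset V, A ⊆ B → ∀ s : V, marg f s B ≤ marg f s A) (s : V) (A : Finset V) :
    marg f s A ≤ f {s} := by
  simpa [marg, hnorm] using hsubmod ∅ A (empty_subset A) s

lemma apply_union_le_add_sum_marg
    (hsubmod : ∀ A B : Finset V, A ⊆ B → ∀ s : V, marg f s B ≤ marg f s A) (A S : Finset V) :
    f (A ∪ S) ≤ f A + ∑ b ∈ S, marg f b A := by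
  induction S using Finset.induction_on with
  | empty => simp
  | insert b S hb ih =>
    rw [union_insert, apply_insert_eq_add_marg f, sum_insert hb]
    linarith [hsubmod A (A ∪ S) subset_union_left b]

lemma add_sum_marg_compl_le [Fintype V]
    (hsubmod : ∀ A B : Finset V, A ⊆ B → ∀ s : V, marg f s B ≤ marg f s A) (B T : Finset V)
    (hBT : Disjoint B T) :
    f B + ∑ x ∈ T, marg f x (univ \ {x}) ≤ f (B ∪ T) := by
  induction T using Finset.induction_on with
  | empty => simp
  | insert x T hx ih =>
    rw [disjoint_insert_right] at hBT
    have hsub : B ∪ T ⊆ univ \ {x} := fun y hy => by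
      have : y ≠ x := by rintro rfl; simp_all
      simpa using this
    rw [union_insert, apply_insert_eq_add_marg f, sum_insert hx]
    linarith [ih hBT.2, hsubmod _ _ hsub x]

end Marginal

section Curvature

variable {V : Type*} [Fintype V] [Nonempty V] [DecidableEq V] {f : Finset V → ℝ}

lemma one_sub_curvature_le (v : V) :
    1 - curvature f ≤ (f univ - f (univ \ {v})) / f {v} := by
  rw [curvature, sub_sub_cancel]
  exact inf'_le _ (mem_univ v)

lemma one_sub_curvature_nonneg (hmono : ∀ A B : Finset V, A ⊆ B → f A ≤ f B)
    (hpos : ∀ v : V, 0 < f {v}) : 0 ≤ 1 - curvature f := by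
  rw [curvature, sub_sub_cancel]
  exact le_inf' _ _ fun v _ =>
    div_nonneg (sub_nonneg.mpr (hmono _ _ sdiff_subset)) (hpos v).le

lemma one_sub_curvature_mul_le_marg_compl (hpos : ∀ v : V, 0 < f {v}) (v : V) :
    (1 - curvature f) * f {v} ≤ marg f v (univ \ {v}) := by
  have hinsert : insert v (univ \ {v}) = univ := by simp
  rw [marg, hinsert]
  exact (le_div_iff₀ (hpos v)).mp (one_sub_curvature_le v)

lemma one_sub_curvature_mul_marg_le (hnorm : f ∅ = 0)
    (hmono : ∀ A B : Finset V, A ⊆ B → f A ≤ f B)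
    (hsubmod : ∀ A B : Finset V, A ⊆ B → ∀ s : V, marg f s B ≤ marg f s A)
    (hpos : ∀ v : V, 0 < f {v}) (v : V) (A : Finset V) :
    (1 - curvature f) * marg f v A ≤ marg f v (univ \ {v}) :=
  (mul_le_mul_of_nonneg_left (marg_le_apply_singleton hnorm hsubmod v A)
    (one_sub_curvature_nonneg hmono hpos)).trans (one_sub_curvature_mul_le_marg_compl hpos v)

end Curvature

/-- curvature-dependent decomposition (eq. (22) of the appendix):
for any set `B` and ordered selections `a 0, …, a (n−1)` with prefixes `A_{[i]}`,
`f(B) ≤ κ·f(A) + (1 − κ)·Σ_{i : a i ∈ B} f(a i | A_{[i]}) + Σ_{b ∈ B \ A} f(b | A)`. -/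
theorem curvature_decomposition {V : Type*} [Fintype V] [Nonempty V] [DecidableEq V]
    (f : Finset V → ℝ)
    (hnorm : f ∅ = 0)
    (hmono : ∀ A B : Finset V, A ⊆ B → f A ≤ f B)
    (hsubmod : ∀ A B : Finset V, A ⊆ B → ∀ s : V, marg f s B ≤ marg f s A)
    (hpos : ∀ v : V, 0 < f {v})
    (n : ℕ) (a : Fin n → V) (ha : Function.Injective a) (B : Finset V) :
    f B ≤ curvature f * f (Finset.univ.image a)
        + (1 - curvature f) *
            ∑ i ∈ Finset.univ.filter (fun i : Fin n => a i ∈ B),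
              marg f (a i) ((Finset.univ.filter (fun j : Fin n => j < i)).image a)
        + ∑ b ∈ B \ Finset.univ.image a, marg f b (Finset.univ.image a) := by
  set A := univ.image a
  set out := univ.filter fun i : Fin n => a i ∉ B
  have hsplit := (sum_filter_add_sum_filter_not univ (fun i : Fin n => a i ∈ B) _).trans
    (sum_marg_prefix_eq f a)
  have hout : (1 - curvature f) *
        ∑ i ∈ out, marg f (a i) ((univ.filter fun j : Fin n => j < i).image a)
      ≤ ∑ i ∈ out, marg f (a i) (univ \ {a i}) := by
    rw [mul_sum]
    exact sum_le_sum fun i _ => one_sub_curvature_mul_marg_le hnorm hmono hsubmod hpos _ _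
  have hlow : f B + ∑ i ∈ out, marg f (a i) (univ \ {a i}) ≤ f (B ∪ A) := by
    have hdisj : Disjoint B (out.image a) := by
      simp only [out, disjoint_left, mem_image, mem_filter, mem_univ, true_and]
      rintro _ hxB ⟨i, hi, rfl⟩
      exact hi hxB
    rw [← sum_image (f := fun x => marg f x (univ \ {x})) fun _ _ _ _ h => ha h]
    exact (add_sum_marg_compl_le hsubmod B _ hdisj).trans
      (hmono _ _ (union_subset_union_right (image_subset_image (filter_subset _ _))))
  have hup : f (B ∪ A) ≤ f A + ∑ b ∈ B \ A, marg f b A := by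
    simpa [union_comm] using apply_union_le_add_sum_marg hsubmod A (B \ A)
  rw [hnorm, sub_zero] at hsplit
  linear_combination hlow + hup + hout - (1 - curvature f) * hsplit
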